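/- Let p ≥ 1 and let Γ ⊂ ℝ² be a line segment with unit normal n and unit tangent τ. If v ∈ ℙ_p(ℝ²) is a polynomial of degree ≤ p such that v|_Γ = 0, ∂_n v|_Γ = 0, and ∂_n^l Δv|_Γ = 0 for l = 0, 1, …, p−2, then v ≡ 0. -/

import Mathlib

/-- Evaluation of a bivariate polynomial as a function `ℝ × ℝ → ℝ`. -/
noncomputable def polyEval (P : MvPolynomial (Fin 2) ℝ) : ℝ × ℝ → ℝ :=
  fun x => MvPolynomial.eval ![x.1, x.2] P

/-- Directional derivative of `f : ℝ × ℝ → ℝ` in direction `n`. -/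
noncomputable def dirDeriv (n : ℝ × ℝ) (f : ℝ × ℝ → ℝ) : ℝ × ℝ → ℝ :=
  fun x => fderiv ℝ f x n

/-- Laplacian of `f : ℝ × ℝ → ℝ`. -/
noncomputable def lap2 (f : ℝ × ℝ → ℝ) : ℝ × ℝ → ℝ :=
  fun x => dirDeriv (1, 0) (dirDeriv (1, 0) f) x + dirDeriv (0, 1) (dirDeriv (0, 1) f) x

/-!
Restricting to the line `ℓ = {A + s (B - A)}` turns bivariate polynomials into univariate ones.
A polynomial vanishing on `Γ` vanishes at infinitely many points of `ℓ`, hence on all of `ℓ`,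
and then so do all its tangential derivatives. With `τ = B - A ⊥ n` and `|n| = 1` one has
`|τ|² ∂ₙ² + ∂_τ² = |τ|² Δ`; applied to `∂ₙᵐ v`, and since `Δ` commutes with `∂ₙ`, it shows by
induction that `∂ₙᵏ v` vanishes on `ℓ` for every `k ≤ p`. Along each normal line through a
point of `ℓ`, `v` is then a polynomial of degree `≤ p` whose derivatives of order `≤ p` vanish
at one point, so it vanishes; these normal lines cover the plane.
-/

namespace Polynomial

lemma eq_zero_of_natDegree_le_of_iterate_derivative_eval_zero {R : Type*} [CommRing R]
    [IsDomain R] [CharZero R] {q : R[X]} {p : ℕ} (hdeg : q.natDegree ≤ p)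
    (h : ∀ k ≤ p, (derivative^[k] q).eval 0 = 0) : q = 0 := by
  ext k
  rw [coeff_zero]
  rcases le_or_gt k p with hk | hk
  · have hk' := h k hk
    rw [← coeff_zero_eq_eval_zero, coeff_iterate_derivative, zero_add, Nat.descFactorial_self,
      nsmul_eq_mul] at hk'
    exact (mul_eq_zero.mp hk').resolve_left (mod_cast k.factorial_ne_zero)
  · exact coeff_eq_zero_of_natDegree_lt (hdeg.trans_lt hk)

end Polynomial

namespace MvPolynomial

variable {R σ : Type*} [CommRing R]

noncomputable def dirPDeriv (d : σ → R) : Derivation R (MvPolynomial σ R) (MvPolynomial σ R) :=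
  mkDerivation R fun i => C (d i)

@[simp]
lemma dirPDeriv_X (d : σ → R) (i : σ) : dirPDeriv d (X i) = C (d i) :=
  mkDerivation_X R _ i

lemma pderiv_eq_dirPDeriv [DecidableEq σ] (i : σ) :
    pderiv i = dirPDeriv (R := R) (Pi.single i 1) :=
  derivation_ext fun j => by simp [pderiv_X, Pi.single_apply, apply_ite C]

lemma dirPDeriv_eq_sum [Fintype σ] (d : σ → R) (f : MvPolynomial σ R) :
    dirPDeriv d f = ∑ i, C (d i) * pderiv i f := by
  classical
  set D : Derivation R (MvPolynomial σ R) (MvPolynomial σ R) :=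
    ∑ i, (C (d i) : MvPolynomial σ R) • pderiv i
  have hD : ∀ g, D g = ∑ i, C (d i) * pderiv i g := fun g => by
    rw [← Derivation.coeFnAddMonoidHom_apply, map_sum, Finset.sum_apply]
    rfl
  have : dirPDeriv d = D := derivation_ext fun j => by simp [hD, pderiv_X, Pi.single_apply]
  rw [this, hD]

/-- The commutator is a derivation that kills every `X i`. -/
lemma dirPDeriv_comm (d e : σ → R) (f : MvPolynomial σ R) :
    dirPDeriv d (dirPDeriv e f) = dirPDeriv e (dirPDeriv d f) := by
  have : ⁅dirPDeriv d, dirPDeriv e⁆ = 0 := derivation_ext fun i => by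
    simp [Derivation.commutator_apply, derivation_C]
  simpa [Derivation.commutator_apply, sub_eq_zero] using congr($this f)

lemma pderiv_pderiv_comm (i j : σ) (f : MvPolynomial σ R) :
    pderiv i (pderiv j f) = pderiv j (pderiv i f) := by
  classical
  simp only [pderiv_eq_dirPDeriv]
  exact dirPDeriv_comm _ _ f

noncomputable def laplacian [Fintype σ] (f : MvPolynomial σ R) : MvPolynomial σ R :=
  ∑ i, pderiv i (pderiv i f)

lemma dirPDeriv_laplacian [Fintype σ] (d : σ → R) (f : MvPolynomial σ R) :
    dirPDeriv d (laplacian f) = laplacian (dirPDeriv d f) := by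
  classical
  simp only [laplacian, map_sum, pderiv_eq_dirPDeriv]
  refine Finset.sum_congr rfl fun i _ => ?_
  rw [dirPDeriv_comm d, dirPDeriv_comm d _ f]

lemma iterate_dirPDeriv_laplacian [Fintype σ] (d : σ → R) (k : ℕ) (f : MvPolynomial σ R) :
    (dirPDeriv d)^[k] (laplacian f) = laplacian ((dirPDeriv d)^[k] f) :=
  (Function.Semiconj.iterate_right (fun g => (dirPDeriv_laplacian d g).symm) k f).symm

lemma laplacian_decomposition (n τ : Fin 2 → R) (hn : n 0 ^ 2 + n 1 ^ 2 = 1)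
    (hperp : n 0 * τ 0 + n 1 * τ 1 = 0) (f : MvPolynomial (Fin 2) R) :
    C (τ 0 ^ 2 + τ 1 ^ 2) * dirPDeriv n (dirPDeriv n f) + dirPDeriv τ (dirPDeriv τ f) =
      C (τ 0 ^ 2 + τ 1 ^ 2) * laplacian f := by
  have hn' : C (n 0) ^ 2 + C (n 1) ^ 2 = (1 : MvPolynomial (Fin 2) R) := by
    simp only [← map_pow, ← map_add, hn, map_one]
  have hperp' : C (n 0) * C (τ 0) + C (n 1) * C (τ 1) = (0 : MvPolynomial (Fin 2) R) := by
    simp only [← map_mul, ← map_add, hperp, map_zero]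
  simp only [dirPDeriv_eq_sum, laplacian, Fin.sum_univ_two, map_add, pderiv_C_mul, map_pow]
  rw [pderiv_pderiv_comm 1 0]
  linear_combination (C (τ 1) ^ 2 * pderiv 0 (pderiv 0 f) + C (τ 0) ^ 2 * pderiv 1 (pderiv 1 f)
      - 2 * C (τ 0) * C (τ 1) * pderiv 0 (pderiv 1 f)) * hn'
    + ((C (n 0) * C (τ 0) - C (n 1) * C (τ 1)) * pderiv 0 (pderiv 0 f)
      + 2 * (C (n 0) * C (τ 1) + C (n 1) * C (τ 0)) * pderiv 0 (pderiv 1 f)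
      + (C (n 1) * C (τ 1) - C (n 0) * C (τ 0)) * pderiv 1 (pderiv 1 f)) * hperp'

noncomputable def restrictLine (x d : σ → R) : MvPolynomial σ R →ₐ[R] Polynomial R :=
  aeval fun i => Polynomial.C (x i) + Polynomial.C (d i) * Polynomial.X

@[simp]
lemma restrictLine_C (x d : σ → R) (c : R) : restrictLine x d (C c) = Polynomial.C c :=
  aeval_C _ c

@[simp]
lemma restrictLine_X (x d : σ → R) (i : σ) :
    restrictLine x d (X i) = Polynomial.C (x i) + Polynomial.C (d i) * Polynomial.X :=
  aeval_X _ i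

lemma eval_restrictLine (x d : σ → R) (t : R) (f : MvPolynomial σ R) :
    (restrictLine x d f).eval t = eval (x + t • d) f := by
  rw [restrictLine, ← Polynomial.coe_aeval_eq_eval, ← AlgHom.comp_apply, comp_aeval,
    ← aeval_eq_eval]
  congr 1 with i
  simp only [map_add, map_mul, Polynomial.aeval_C, Polynomial.aeval_X, aeval_X,
    Algebra.algebraMap_self, RingHom.id_apply, Pi.add_apply, Pi.smul_apply, smul_eq_mul, mul_comm]

lemma natDegree_aeval_le_totalDegree (g : σ → Polynomial R) (hg : ∀ i, (g i).natDegree ≤ 1)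
    (f : MvPolynomial σ R) : (aeval g f).natDegree ≤ f.totalDegree := by
  conv_lhs => rw [f.as_sum, map_sum]
  refine Polynomial.natDegree_sum_le_of_forall_le _ _ fun s hs => ?_
  rw [aeval_monomial, ← Polynomial.C_eq_algebraMap]
  refine (Polynomial.natDegree_C_mul_le _ _).trans <| (Polynomial.natDegree_prod_le _ _).trans <|
    le_trans ?_ (le_totalDegree hs)
  refine Finset.sum_le_sum fun i _ => Polynomial.natDegree_pow_le.trans ?_
  simpa using Nat.mul_le_mul_left (s i) (hg i)

lemma natDegree_restrictLine_le (x d : σ → R) (f : MvPolynomial σ R) :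
    (restrictLine x d f).natDegree ≤ f.totalDegree :=
  natDegree_aeval_le_totalDegree _ (fun _ => by compute_degree) f

lemma derivative_restrictLine (x d : σ → R) (f : MvPolynomial σ R) :
    Polynomial.derivative (restrictLine x d f) = restrictLine x d (dirPDeriv d f) := by
  induction f using MvPolynomial.induction_on with
  | C a => rw [derivation_C, map_zero, restrictLine_C, Polynomial.derivative_C]
  | add f g hf hg => simp only [map_add, hf, hg]
  | mul_X f i hf =>
    simp only [map_mul, Polynomial.derivative_mul, hf, Derivation.leibniz, dirPDeriv_X,
      smul_eq_mul, map_add, restrictLine_X, restrictLine_C,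
      Polynomial.derivative_C, Polynomial.derivative_X, zero_add, zero_mul, mul_one]
    ring

lemma iterate_derivative_restrictLine (x d : σ → R) (k : ℕ) (f : MvPolynomial σ R) :
    Polynomial.derivative^[k] (restrictLine x d f) = restrictLine x d ((dirPDeriv d)^[k] f) :=
  (Function.Semiconj.iterate_right (fun g => (derivative_restrictLine x d g).symm) k f).symm

theorem restrictLine_iterate_dirPDeriv_eq_zero [IsDomain R] {a n τ : Fin 2 → R}
    (hn : n 0 ^ 2 + n 1 ^ 2 = 1) (hperp : n 0 * τ 0 + n 1 * τ 1 = 0)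
    (hτ : τ 0 ^ 2 + τ 1 ^ 2 ≠ 0) {p : ℕ} {v : MvPolynomial (Fin 2) R}
    (h0 : restrictLine a τ v = 0) (h1 : restrictLine a τ (dirPDeriv n v) = 0)
    (h2 : ∀ l ≤ p - 2, restrictLine a τ ((dirPDeriv n)^[l] (laplacian v)) = 0) :
    ∀ k ≤ p, restrictLine a τ ((dirPDeriv n)^[k] v) = 0 := by
  intro k
  induction k using Nat.twoStepInduction with
  | zero => exact fun _ => h0
  | one => exact fun _ => h1
  | more m ih _ =>
    intro hm
    set u := (dirPDeriv n)^[m] v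
    have hu : restrictLine a τ u = 0 := ih (by omega)
    have hlap : restrictLine a τ (laplacian u) = 0 := by
      rw [← iterate_dirPDeriv_laplacian]
      exact h2 m (by omega)
    have htan : restrictLine a τ (dirPDeriv τ (dirPDeriv τ u)) = 0 := by
      rw [← derivative_restrictLine, ← derivative_restrictLine, hu, map_zero, map_zero]
    have key := congr(restrictLine a τ $(laplacian_decomposition n τ hn hperp u))
    rw [map_add, htan, add_zero] at key
    simp only [map_mul, restrictLine_C, hlap, mul_zero, mul_eq_zero, Polynomial.C_eq_zero] at key
    rw [Function.iterate_succ_apply', Function.iterate_succ_apply']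
    exact key.resolve_left hτ

theorem eq_zero_of_restrictLine_iterate_dirPDeriv_eq_zero [IsDomain R] [CharZero R]
    {a n τ : σ → R} (hspan : ∀ y, ∃ s t : R, y = a + s • τ + t • n) {p : ℕ}
    {v : MvPolynomial σ R} (hdeg : v.totalDegree ≤ p)
    (h : ∀ k ≤ p, restrictLine a τ ((dirPDeriv n)^[k] v) = 0) : v = 0 := by
  refine MvPolynomial.funext fun y => ?_
  obtain ⟨s, t, rfl⟩ := hspan y
  have hnormal : restrictLine (a + s • τ) n v = 0 := by
    refine Polynomial.eq_zero_of_natDegree_le_of_iterate_derivative_eval_zero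
      ((natDegree_restrictLine_le _ _ v).trans hdeg) fun k hk => ?_
    rw [iterate_derivative_restrictLine, eval_restrictLine, zero_smul, add_zero,
      ← eval_restrictLine, h k hk, Polynomial.eval_zero]
  rw [map_zero, ← eval_restrictLine, hnormal, Polynomial.eval_zero]

end MvPolynomial

lemma exists_eq_add_smul_add_smul {K : Type*} [Field K] {n τ : Fin 2 → K}
    (hn : n 0 ^ 2 + n 1 ^ 2 = 1) (hperp : n 0 * τ 0 + n 1 * τ 1 = 0)
    (hτ : τ 0 ^ 2 + τ 1 ^ 2 ≠ 0) (a y : Fin 2 → K) : ∃ s t : K, y = a + s • τ + t • n := by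
  -- the coordinates of `y - a` in the orthogonal basis `(τ, n)`
  refine ⟨((y 0 - a 0) * τ 0 + (y 1 - a 1) * τ 1) / (τ 0 ^ 2 + τ 1 ^ 2),
    (y 0 - a 0) * n 0 + (y 1 - a 1) * n 1, ?_⟩
  ext i
  fin_cases i <;> simp only [Fin.zero_eta, Fin.mk_one, Pi.add_apply, Pi.smul_apply, smul_eq_mul] <;>
    field_simp
  · linear_combination (-(y 0 - a 0) * τ 1 ^ 2 + (y 1 - a 1) * τ 0 * τ 1) * hn
      + (-(y 0 - a 0) * (n 0 * τ 0 - n 1 * τ 1) - (y 1 - a 1) * (n 0 * τ 1 + n 1 * τ 0)) * hperp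
  · linear_combination (-(y 1 - a 1) * τ 0 ^ 2 + (y 0 - a 0) * τ 0 * τ 1) * hn
      + (-(y 1 - a 1) * (n 1 * τ 1 - n 0 * τ 0) - (y 0 - a 0) * (n 1 * τ 0 + n 0 * τ 1)) * hperp

open MvPolynomial

abbrev toVec : (ℝ × ℝ) ≃ₗ[ℝ] (Fin 2 → ℝ) := (LinearEquiv.finTwoArrow ℝ ℝ).symm

lemma polyEval_eq_eval (w : MvPolynomial (Fin 2) ℝ) (x : ℝ × ℝ) :
    polyEval w x = eval (toVec x) w := rfl

lemma polyEval_add_smul (w : MvPolynomial (Fin 2) ℝ) (x d : ℝ × ℝ) (t : ℝ) :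
    polyEval w (x + t • d) = (restrictLine (toVec x) (toVec d) w).eval t := by
  rw [eval_restrictLine, polyEval_eq_eval, map_add, map_smul]

lemma differentiable_polyEval (w : MvPolynomial (Fin 2) ℝ) : Differentiable ℝ (polyEval w) :=
  fun x => (AnalyticOnNhd.eval_continuousLinearMap
    (LinearMap.toContinuousLinearMap (toVec : (ℝ × ℝ) →ₗ[ℝ] Fin 2 → ℝ)) w x
    trivial).differentiableAt

lemma dirDeriv_polyEval (d : ℝ × ℝ) (w : MvPolynomial (Fin 2) ℝ) :
    dirDeriv d (polyEval w) = polyEval (dirPDeriv (toVec d) w) := by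
  funext x
  have hline : HasDerivAt (fun t : ℝ => x + t • d) d 0 := by
    simpa using ((hasDerivAt_id (0 : ℝ)).smul_const d).const_add x
  have hchain : HasDerivAt (fun t : ℝ => polyEval w (x + t • d)) (dirDeriv d (polyEval w) x) 0 :=
    (differentiable_polyEval w x).hasFDerivAt.comp_hasDerivAt_of_eq 0 hline (by simp)
  have hpoly : HasDerivAt (fun t : ℝ => polyEval w (x + t • d))
      (polyEval (dirPDeriv (toVec d) w) x) 0 := by
    simp_rw [polyEval_add_smul]
    refine (Polynomial.hasDerivAt _ 0).congr_deriv ?_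
    rw [derivative_restrictLine, eval_restrictLine, zero_smul, add_zero, polyEval_eq_eval]
  exact hchain.unique hpoly

lemma iterate_dirDeriv_polyEval (d : ℝ × ℝ) (k : ℕ) (w : MvPolynomial (Fin 2) ℝ) :
    (dirDeriv d)^[k] (polyEval w) = polyEval ((dirPDeriv (toVec d))^[k] w) :=
  (Function.Semiconj.iterate_right (fun g => (dirDeriv_polyEval d g).symm) k w).symm

lemma lap2_polyEval (w : MvPolynomial (Fin 2) ℝ) : lap2 (polyEval w) = polyEval (laplacian w) := by
  have e0 : toVec (1, 0) = Pi.single 0 1 := by ext i; fin_cases i <;> rfl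
  have e1 : toVec (0, 1) = Pi.single 1 1 := by ext i; fin_cases i <;> rfl
  funext x
  simp only [lap2, dirDeriv_polyEval, e0, e1, ← pderiv_eq_dirPDeriv, laplacian, Fin.sum_univ_two,
    polyEval_eq_eval, map_add]

lemma restrictLine_eq_zero_of_segment {A B : ℝ × ℝ} {w : MvPolynomial (Fin 2) ℝ}
    (h : ∀ x ∈ segment ℝ A B, polyEval w x = 0) :
    restrictLine (toVec A) (toVec (B - A)) w = 0 := by
  refine Polynomial.eq_zero_of_infinite_isRoot _
    ((Set.Icc_infinite zero_lt_one).mono fun s hs => ?_)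
  rw [Set.mem_ofPred_eq, Polynomial.IsRoot, ← polyEval_add_smul]
  exact h _ (segment_eq_image' ℝ A B ▸ ⟨s, hs, rfl⟩)

theorem stmt_11_general (p : ℕ) (A B : ℝ × ℝ) (hAB : A ≠ B)
    (n : ℝ × ℝ) (hn : n.1 ^ 2 + n.2 ^ 2 = 1)
    (hperp : n.1 * (B.1 - A.1) + n.2 * (B.2 - A.2) = 0)
    (v : MvPolynomial (Fin 2) ℝ) (hdeg : v.totalDegree ≤ p)
    (h0 : ∀ x ∈ segment ℝ A B, polyEval v x = 0)
    (h1 : ∀ x ∈ segment ℝ A B, dirDeriv n (polyEval v) x = 0)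
    (h2 : ∀ l, l ≤ p - 2 → ∀ x ∈ segment ℝ A B,
      (dirDeriv n)^[l] (lap2 (polyEval v)) x = 0) :
    v = 0 := by
  have hτ : (B.1 - A.1) ^ 2 + (B.2 - A.2) ^ 2 ≠ 0 := by
    rw [Ne, sq, sq, mul_self_add_mul_self_eq_zero, sub_eq_zero, sub_eq_zero, ← Prod.ext_iff]
    exact hAB.symm
  have hnormal := restrictLine_iterate_dirPDeriv_eq_zero (a := toVec A) (n := toVec n)
    (τ := toVec (B - A)) hn hperp hτ (restrictLine_eq_zero_of_segment h0)
    (restrictLine_eq_zero_of_segment fun x hx => by rw [← dirDeriv_polyEval]; exact h1 x hx)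
    fun l hl => restrictLine_eq_zero_of_segment fun x hx => by
      rw [← iterate_dirDeriv_polyEval, ← lap2_polyEval]; exact h2 l hl x hx
  exact eq_zero_of_restrictLine_iterate_dirPDeriv_eq_zero
    (exists_eq_add_smul_add_smul hn hperp hτ _) hdeg hnormal

/-- A polynomial of degree `≤ p` vanishing on a line segment `Γ` together with its
normal derivative and the normal derivatives of its Laplacian up to order `p − 2`
is identically zero. -/
theorem stmt_11 (p : ℕ) (hp : 1 ≤ p) (A B : ℝ × ℝ) (hAB : A ≠ B)
    (n : ℝ × ℝ) (hn : n.1 ^ 2 + n.2 ^ 2 = 1)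
    (hperp : n.1 * (B.1 - A.1) + n.2 * (B.2 - A.2) = 0)
    (v : MvPolynomial (Fin 2) ℝ) (hdeg : v.totalDegree ≤ p)
    (h0 : ∀ x ∈ segment ℝ A B, polyEval v x = 0)
    (h1 : ∀ x ∈ segment ℝ A B, dirDeriv n (polyEval v) x = 0)
    (h2 : ∀ l, l ≤ p - 2 → ∀ x ∈ segment ℝ A B,
      (dirDeriv n)^[l] (lap2 (polyEval v)) x = 0) :
    v = 0 :=
  stmt_11_general p A B hAB n hn hperp v hdeg h0 h1 h2
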